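/- Let L be a bounded lattice and (𝓕_L, 𝓘_L, ⋔) its canonical polarity. For a ∈ L let θ(a) = {F ∈ 𝓕_L : a ∈ F}. Then: (i) each θ(a) is a stable subset of 𝓕_L; (ii) θ is an injective lattice embedding of L into the stable set lattice: θ(a ∧ b) = θ(a) ∩ θ(b), θ(a ∨ b) = λ_⋔ ρ_⋔ (θ(a) ∪ θ(b)), θ(1) = 𝓕_L, θ(0) = λ_⋔ 𝓘_L; (iii) the completion is dense: every stable subset A of 𝓕_L satisfies A = λ_⋔ ρ_⋔ (⋃_{F∈A} ⋂_{a∈F} θ(a)) and A = ⋂_{D ∈ ρ_⋔ A} λ_⋔ ρ_⋔ (⋃_{a∈D} θ(a)); (iv) the completion is compact: for all Z, W ⊆ L, if ⋂_{a∈Z} θ(a) ⊆ λ_⋔ ρ_⋔ (⋃_{b∈W} θ(b)), then there exist finite Z′ ⊆ Z and W′ ⊆ W with ⋀Z′ ≤ ⋁W′ in L. Thus the stable set lattice of the canonical polarity is a canonical extension of L. -/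

import Mathlib

/-- The right polar `ρ_R A = {y ∈ Y : ∀ x ∈ A, x R y}`. -/
def rpolar {X Y : Type*} (R : X → Y → Prop) (A : Set X) : Set Y := {y | ∀ x ∈ A, R x y}

/-- The left polar `λ_R B = {x ∈ X : ∀ y ∈ B, x R y}`. -/
def lpolar {X Y : Type*} (R : X → Y → Prop) (B : Set Y) : Set X := {x | ∀ y ∈ B, R x y}

/-- `A ⊆ X` is stable if `A = λ_R (ρ_R A)`. -/
def StableX {X Y : Type*} (R : X → Y → Prop) (A : Set X) : Prop := A = lpolar R (rpolar R A)

/-- `B ⊆ Y` is stable if `B = ρ_R (λ_R B)`. -/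
def StableY {X Y : Type*} (R : X → Y → Prop) (B : Set Y) : Prop := B = rpolar R (lpolar R B)

/-- The quasi-order `≤₁` on `X`. -/
def le1 {X Y : Type*} (R : X → Y → Prop) (x x' : X) : Prop := rpolar R {x} ⊆ rpolar R {x'}

/-- The quasi-order `≤₂` on `Y`. -/
def le2 {X Y : Type*} (R : X → Y → Prop) (y y' : Y) : Prop := lpolar R {y} ⊆ lpolar R {y'}

/-- The operator `f_S` induced on stable sets by `S ⊆ Xⁿ × Y`. -/
def fS {X Y : Type*} {n : ℕ} (R : X → Y → Prop) (S : (Fin n → X) → Y → Prop)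
    (A : Fin n → Set X) : Set X :=
  lpolar R {y | ∀ xs : Fin n → X, (∀ i, xs i ∈ A i) → S xs y}

/-- The dual operator `g_T` induced on stable sets by `T ⊆ X × Yᵐ`. -/
def gT {X Y : Type*} {m : ℕ} (R : X → Y → Prop) (T : X → (Fin m → Y) → Prop)
    (A : Fin m → Set X) : Set X :=
  {x | ∀ ys : Fin m → Y, (∀ i, ys i ∈ rpolar R (A i)) → T x ys}

/-- All sections of `S ⊆ Xⁿ × Y` are stable. -/
def SSectionsStable {X Y : Type*} {n : ℕ} (R : X → Y → Prop)
    (S : (Fin n → X) → Y → Prop) : Prop :=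
  (∀ xs : Fin n → X, StableY R {y | S xs y}) ∧
  (∀ (xs : Fin n → X) (i : Fin n) (y : Y), StableX R {x' | S (Function.update xs i x') y})

/-- All sections of `T ⊆ X × Yᵐ` are stable. -/
def TSectionsStable {X Y : Type*} {m : ℕ} (R : X → Y → Prop)
    (T : X → (Fin m → Y) → Prop) : Prop :=
  (∀ ys : Fin m → Y, StableX R {x | T x ys}) ∧
  (∀ (x : X) (ys : Fin m → Y) (i : Fin m), StableY R {y' | T x (Function.update ys i y')})
/-- A nonempty lattice filter: nonempty, upward closed, closed under binary meets. -/
def IsLatFilter {L : Type*} [Lattice L] (F : Set L) : Prop :=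
  F.Nonempty ∧ (∀ ⦃a b : L⦄, a ∈ F → a ≤ b → b ∈ F) ∧ (∀ ⦃a b : L⦄, a ∈ F → b ∈ F → a ⊓ b ∈ F)

/-- A nonempty lattice ideal: nonempty, downward closed, closed under binary joins. -/
def IsLatIdeal {L : Type*} [Lattice L] (D : Set L) : Prop :=
  D.Nonempty ∧ (∀ ⦃a b : L⦄, a ∈ D → b ≤ a → b ∈ D) ∧ (∀ ⦃a b : L⦄, a ∈ D → b ∈ D → a ⊔ b ∈ D)

/-- The set `𝓕_L` of nonempty filters of `L`. -/
abbrev Filt (L : Type*) [Lattice L] := {F : Set L // IsLatFilter F}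

/-- The set `𝓘_L` of nonempty ideals of `L`. -/
abbrev Idl (L : Type*) [Lattice L] := {D : Set L // IsLatIdeal D}

/-- The canonical polarity relation: `F ⋔ D` iff `F ∩ D ≠ ∅`. -/
def canR {L : Type*} [Lattice L] (F : Filt L) (D : Idl L) : Prop := (F.val ∩ D.val).Nonempty

/-!
Each `θ a` is the polar `λ {↓a}` of the principal ideal of `a`, hence stable, and its own polar
`ρ (θ a)` consists of the ideals containing `a`; the lattice-embedding properties follow from
these two descriptions. For density, a filter `F ∈ A` lies in `⋂ a ∈ F, θ a`, which stays inside
the closure of `A`, while `⋃ a ∈ D, θ a` is the basic stable set `λ {D}`. For compactness, apply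
the hypothesis to the filter generated by `Z` and the ideal generated by `W`.
-/

section Polarity

variable {X Y : Type*} (R : X → Y → Prop)

theorem subset_lpolar_rpolar (A : Set X) : A ⊆ lpolar R (rpolar R A) :=
  fun _ hx _ hy => hy _ hx

theorem subset_rpolar_lpolar (B : Set Y) : B ⊆ rpolar R (lpolar R B) :=
  fun _ hy _ hx => hx _ hy

theorem lpolar_anti {B B' : Set Y} (h : B ⊆ B') : lpolar R B' ⊆ lpolar R B :=
  fun _ hx y hy => hx y (h hy)

theorem rpolar_union (A A' : Set X) : rpolar R (A ∪ A') = rpolar R A ∩ rpolar R A' := by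
  ext y
  simp only [rpolar, Set.mem_union, Set.mem_inter_iff, Set.mem_ofPred_eq, or_imp, forall_and]

theorem lpolar_rpolar_lpolar (B : Set Y) : lpolar R (rpolar R (lpolar R B)) = lpolar R B :=
  (lpolar_anti R (subset_rpolar_lpolar R B)).antisymm (subset_lpolar_rpolar R _)

theorem stableX_lpolar (B : Set Y) : StableX R (lpolar R B) :=
  (lpolar_rpolar_lpolar R B).symm

theorem lpolar_eq_biInter (B : Set Y) : lpolar R B = ⋂ y ∈ B, lpolar R {y} := by
  ext x
  simp [lpolar]

theorem StableX.eq_biInter_lpolar_singleton {A : Set X} (hA : StableX R A) :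
    A = ⋂ y ∈ rpolar R A, lpolar R {y} :=
  hA.trans (lpolar_eq_biInter R _)

theorem rpolar_eq_of_subset_of_subset {A B : Set X} (hAB : A ⊆ B)
    (hB : B ⊆ lpolar R (rpolar R A)) : rpolar R B = rpolar R A :=
  Set.Subset.antisymm (fun _ hy x hx => hy x (hAB hx)) (fun y hy _ hx => hB hx y hy)

end Polarity

section CanonicalPolarity

variable {L : Type*} [Lattice L]

namespace Filt

theorem mem_of_le (F : Filt L) {a b : L} (ha : a ∈ F.val) (hab : a ≤ b) : b ∈ F.val :=
  F.2.2.1 ha hab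

theorem inf_mem_iff (F : Filt L) {a b : L} : a ⊓ b ∈ F.val ↔ a ∈ F.val ∧ b ∈ F.val :=
  ⟨fun h => ⟨F.mem_of_le h inf_le_left, F.mem_of_le h inf_le_right⟩,
    fun h => F.2.2.2 h.1 h.2⟩

theorem top_mem [OrderTop L] (F : Filt L) : ⊤ ∈ F.val :=
  F.2.1.elim fun _ hc => F.mem_of_le hc le_top

def principal (a : L) : Filt L :=
  ⟨{b | a ≤ b}, ⟨a, le_rfl⟩, fun _ _ h h' => h.trans h', fun _ _ => le_inf⟩

def generate [OrderTop L] (Z : Set L) : Filt L :=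
  ⟨{c | ∃ Z' : Finset L, ↑Z' ⊆ Z ∧ Z'.inf id ≤ c}, ⟨⊤, ∅, by simp, le_top⟩,
    fun _ _ ⟨Z', hZ', h⟩ hab => ⟨Z', hZ', h.trans hab⟩,
    fun _ _ ⟨Z₁, hZ₁, h₁⟩ ⟨Z₂, hZ₂, h₂⟩ => by
      classical
      exact ⟨Z₁ ∪ Z₂, by simpa using ⟨hZ₁, hZ₂⟩,
        by simpa only [Finset.inf_union] using inf_le_inf h₁ h₂⟩⟩

theorem subset_generate [OrderTop L] (Z : Set L) : Z ⊆ (generate Z).val :=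
  fun a ha => ⟨{a}, by simpa using ha, by simp⟩

end Filt

namespace Idl

theorem mem_of_le (D : Idl L) {a b : L} (ha : a ∈ D.val) (hba : b ≤ a) : b ∈ D.val :=
  D.2.2.1 ha hba

theorem sup_mem_iff (D : Idl L) {a b : L} : a ⊔ b ∈ D.val ↔ a ∈ D.val ∧ b ∈ D.val :=
  ⟨fun h => ⟨D.mem_of_le h le_sup_left, D.mem_of_le h le_sup_right⟩,
    fun h => D.2.2.2 h.1 h.2⟩

theorem bot_mem [OrderBot L] (D : Idl L) : ⊥ ∈ D.val :=
  D.2.1.elim fun _ hc => D.mem_of_le hc bot_le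

def principal (a : L) : Idl L :=
  ⟨{b | b ≤ a}, ⟨a, le_rfl⟩, fun _ _ h h' => h'.trans h, fun _ _ => sup_le⟩

def generate [OrderBot L] (W : Set L) : Idl L :=
  ⟨{c | ∃ W' : Finset L, ↑W' ⊆ W ∧ c ≤ W'.sup id}, ⟨⊥, ∅, by simp, bot_le⟩,
    fun _ _ ⟨W', hW', h⟩ hba => ⟨W', hW', hba.trans h⟩,
    fun _ _ ⟨W₁, hW₁, h₁⟩ ⟨W₂, hW₂, h₂⟩ => by
      classical
      exact ⟨W₁ ∪ W₂, by simpa using ⟨hW₁, hW₂⟩,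
        by simpa only [Finset.sup_union] using sup_le_sup h₁ h₂⟩⟩

theorem subset_generate [OrderBot L] (W : Set L) : W ⊆ (generate W).val :=
  fun a ha => ⟨{a}, by simpa using ha, by simp⟩

end Idl

theorem canR_of_subset {F G : Filt L} {D : Idl L} (hFG : F.val ⊆ G.val) (h : canR F D) :
    canR G D :=
  h.mono (Set.inter_subset_inter_left _ hFG)

/-- The paper's `θ`. -/
def theta (a : L) : Set (Filt L) := {F | a ∈ F.val}

theorem theta_inf (a b : L) : theta (a ⊓ b) = theta a ∩ theta b :=
  Set.ext fun F => F.inf_mem_iff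

theorem theta_top [OrderTop L] : theta (⊤ : L) = Set.univ :=
  Set.eq_univ_of_forall Filt.top_mem

theorem theta_subset_theta_iff {a b : L} : theta a ⊆ theta b ↔ a ≤ b :=
  ⟨fun h => h (show Filt.principal a ∈ theta a from le_refl a),
    fun hab F ha => F.mem_of_le ha hab⟩

theorem theta_injective : Function.Injective (theta : L → Set (Filt L)) := fun _ _ h =>
  le_antisymm (theta_subset_theta_iff.1 h.le) (theta_subset_theta_iff.1 h.ge)

theorem theta_eq_lpolar_principal (a : L) : theta a = lpolar canR {Idl.principal a} := by
  ext F
  simp only [theta, lpolar, Set.mem_singleton_iff, forall_eq, Set.mem_ofPred_eq]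
  exact ⟨fun ha => ⟨a, ha, le_rfl⟩, fun ⟨_, hc, hca⟩ => F.mem_of_le hc hca⟩

theorem stableX_theta (a : L) : StableX canR (theta a) := by
  rw [theta_eq_lpolar_principal]
  exact stableX_lpolar _ _

theorem rpolar_theta (a : L) : rpolar canR (theta a) = {D | a ∈ D.val} := by
  ext D
  refine ⟨fun hD => ?_, fun ha F hF => ⟨a, hF, ha⟩⟩
  obtain ⟨c, hac, hc⟩ := hD (Filt.principal a) (le_refl a)
  exact D.mem_of_le hc hac

theorem theta_sup (a b : L) :
    theta (a ⊔ b) = lpolar canR (rpolar canR (theta a ∪ theta b)) := by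
  have : rpolar canR (theta a ∪ theta b) = rpolar canR (theta (a ⊔ b)) := by
    ext D
    simp only [rpolar_union, rpolar_theta, Set.mem_inter_iff, Set.mem_ofPred_eq, D.sup_mem_iff]
  rw [this]
  exact stableX_theta _

theorem theta_bot [OrderBot L] : theta (⊥ : L) = lpolar canR Set.univ :=
  Set.Subset.antisymm (fun _ hF D _ => ⟨⊥, hF, D.bot_mem⟩)
    ((lpolar_anti _ (Set.subset_univ _)).trans (theta_eq_lpolar_principal ⊥).ge)

theorem biUnion_theta (D : Idl L) : ⋃ a ∈ D.val, theta a = lpolar canR {D} := by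
  ext F
  simp only [theta, lpolar, canR, Set.mem_iUnion, Set.mem_singleton_iff, forall_eq,
    Set.mem_ofPred_eq, exists_prop, Set.Nonempty, Set.mem_inter_iff, and_comm]

theorem StableX.eq_lpolar_rpolar_biUnion_biInter_theta {A : Set (Filt L)}
    (hA : StableX canR A) :
    A = lpolar canR (rpolar canR (⋃ F ∈ A, ⋂ a ∈ F.val, theta a)) := by
  have hsub : A ⊆ ⋃ F ∈ A, ⋂ a ∈ F.val, theta a := fun F hF =>
    Set.mem_biUnion hF (Set.mem_iInter₂.2 fun _ ha => ha)
  have hclosed : (⋃ F ∈ A, ⋂ a ∈ F.val, theta a) ⊆ lpolar canR (rpolar canR A) := by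
    intro G hG D hD
    obtain ⟨F, hF, hFG⟩ := Set.mem_iUnion₂.1 hG
    exact canR_of_subset (fun a ha => Set.mem_iInter₂.1 hFG a ha) (hD F hF)
  rw [rpolar_eq_of_subset_of_subset canR hsub hclosed]
  exact hA

theorem StableX.eq_biInter_lpolar_rpolar_biUnion_theta {A : Set (Filt L)}
    (hA : StableX canR A) :
    A = ⋂ D ∈ rpolar canR A, lpolar canR (rpolar canR (⋃ a ∈ D.val, theta a)) := by
  simp only [biUnion_theta, lpolar_rpolar_lpolar]
  exact hA.eq_biInter_lpolar_singleton

/-- The filter generated by `Z` and the ideal generated by `W` meet. -/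
theorem exists_finset_inf_le_sup_of_biInter_theta_subset [BoundedOrder L] {Z W : Set L}
    (h : ⋂ a ∈ Z, theta a ⊆ lpolar canR (rpolar canR (⋃ b ∈ W, theta b))) :
    ∃ Z' W' : Finset L, ↑Z' ⊆ Z ∧ ↑W' ⊆ W ∧ Z'.inf id ≤ W'.sup id := by
  have hZ : Filt.generate Z ∈ ⋂ a ∈ Z, theta a :=
    Set.mem_iInter₂.2 fun _ ha => Filt.subset_generate Z ha
  have hW : Idl.generate W ∈ rpolar canR (⋃ b ∈ W, theta b) := by
    intro G hG
    obtain ⟨b, hb, hbG⟩ := Set.mem_iUnion₂.1 hG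
    exact ⟨b, hbG, Idl.subset_generate W hb⟩
  obtain ⟨c, ⟨Z', hZ', hZc⟩, ⟨W', hW', hcW⟩⟩ := h hZ _ hW
  exact ⟨Z', W', hZ', hW', hZc.trans hcW⟩

end CanonicalPolarity

/-- The map `θ a = {F ∈ 𝓕_L : a ∈ F}` embeds a bounded lattice `L` densely and compactly
into the stable set lattice of its canonical polarity, which is therefore a canonical
extension of `L`. -/
theorem stmt16 {L : Type*} [Lattice L] [BoundedOrder L] :
    -- (i) each `θ a` is stable
    (∀ a : L, StableX (canR (L := L)) {F : Filt L | a ∈ F.val}) ∧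
    -- (ii) `θ` is an injective lattice embedding into the stable set lattice
    (∀ a b : L, {F : Filt L | a ⊓ b ∈ F.val} =
      {F : Filt L | a ∈ F.val} ∩ {F : Filt L | b ∈ F.val}) ∧
    (∀ a b : L, {F : Filt L | a ⊔ b ∈ F.val} =
      lpolar (canR (L := L)) (rpolar (canR (L := L))
        ({F : Filt L | a ∈ F.val} ∪ {F : Filt L | b ∈ F.val}))) ∧
    ({F : Filt L | (⊤ : L) ∈ F.val} = (Set.univ : Set (Filt L))) ∧
    ({F : Filt L | (⊥ : L) ∈ F.val} = lpolar (canR (L := L)) (Set.univ : Set (Idl L))) ∧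
    Function.Injective (fun a : L => {F : Filt L | a ∈ F.val}) ∧
    -- (iii) density: every stable set is a join of meets and a meet of joins of `θ`-images
    (∀ A : Set (Filt L), StableX (canR (L := L)) A →
      A = lpolar (canR (L := L)) (rpolar (canR (L := L))
            (⋃ F ∈ A, ⋂ a ∈ (F : Filt L).val, {G : Filt L | a ∈ G.val}))) ∧
    (∀ A : Set (Filt L), StableX (canR (L := L)) A →
      A = ⋂ D ∈ rpolar (canR (L := L)) A,
            lpolar (canR (L := L)) (rpolar (canR (L := L))
              (⋃ a ∈ (D : Idl L).val, {G : Filt L | a ∈ G.val}))) ∧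
    -- (iv) compactness
    (∀ Z W : Set L,
      (⋂ a ∈ Z, {F : Filt L | a ∈ F.val}) ⊆
        lpolar (canR (L := L)) (rpolar (canR (L := L))
          (⋃ b ∈ W, {F : Filt L | b ∈ F.val})) →
      ∃ Z' W' : Finset L, ↑Z' ⊆ Z ∧ ↑W' ⊆ W ∧ Z'.inf id ≤ W'.sup id) := by
  exact ⟨stableX_theta, theta_inf, theta_sup, theta_top, theta_bot, theta_injective,
    fun _ hA => hA.eq_lpolar_rpolar_biUnion_biInter_theta,
    fun _ hA => hA.eq_biInter_lpolar_rpolar_biUnion_theta,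
    fun _ _ => exists_finset_inf_le_sup_of_biInter_theta_subset⟩
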